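/- (Proposition 3.1(2).) Let 0 < ε₀ ≤ κ ≤ 1 and let f : [0,∞) → ℝ be bounded and continuous with f(0) = 0, twice continuously differentiable on (0,∞), with f' ≥ 0 and f'' ≤ 0 on (0,2]. Assume additionally ∫_{|z|≤1} |z| ν(dz) < ∞. Define J(r) := inf_{x,y ∈ ℝ^d, |x−y| = r} μ_{x,y,x−y}(ℝ^d). Then for all x, y ∈ ℝ^d with 0 < |x−y| ≤ ε₀, with h_f(x,y) := f(|x−y|): L̃ h_f(x,y) ≤ (1/2) J(|x−y|) (f(2|x−y|) − 2 f(|x−y|)) + 4 (∫_{|z|≤1} |c(x,z) − c(y,z)| |z| ν(dz)) f'(|x−y|) + 2 ν({z : |z| > 1}) (sup_{x ∈ ℝ^d, |z| > 1} c(x,z)) ‖f‖_∞. -/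

import Mathlib

open MeasureTheory Set
open scoped ENNReal RealInnerProductSpace

noncomputable section

/-- `ℝ^d` as a Euclidean space. -/
abbrev Ed (d : ℕ) := EuclideanSpace ℝ (Fin d)

/-- A Lévy measure on `ℝ^d`. -/
def IsLevyMeasure {d : ℕ} (ν : Measure (Ed d)) : Prop :=
  ν {0} = 0 ∧ ∫⁻ z, ENNReal.ofReal (min 1 (‖z‖ ^ 2)) ∂ν < ⊤

/-- `ν_u := ν ∧ (δ_u ∗ ν)`. -/
def nuShift {d : ℕ} (ν : Measure (Ed d)) (u : Ed d) : Measure (Ed d) :=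
  ν ⊓ ν.map (fun w => w + u)

/-- `c(x,y,u,z) = min(c(x,z), c(y,z), c(x,z−u), c(y,z−u))`. -/
def cmin {d : ℕ} (c : Ed d → Ed d → ℝ) (x y u z : Ed d) : ℝ :=
  min (min (c x z) (c y z)) (min (c x (z - u)) (c y (z - u)))

/-- `μ_{x,y,u}(dz) = c(x,y,u,z) ν_u(dz)`. -/
def muXYU {d : ℕ} (ν : Measure (Ed d)) (c : Ed d → Ed d → ℝ) (x y u : Ed d) :
    Measure (Ed d) :=
  (nuShift ν u).withDensity (fun z => ENNReal.ofReal (cmin c x y u z))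

/-- `ν̃_{x,y}(dz) = min(c(x,z), c(y,z)) ν(dz)`. -/
def nuTilde {d : ℕ} (ν : Measure (Ed d)) (c : Ed d → Ed d → ℝ) (x y : Ed d) :
    Measure (Ed d) :=
  ν.withDensity (fun z => ENNReal.ofReal (min (c x z) (c y z)))

/-- `c̃(x,y,z) = c(x,z) − min(c(x,z), c(y,z))`. -/
def ctilde {d : ℕ} (c : Ed d → Ed d → ℝ) (x y z : Ed d) : ℝ :=
  c x z - min (c x z) (c y z)

/-- `(x−y)_κ = min(1, κ/|x−y|) (x−y)`. -/
def kap {d : ℕ} (κ : ℝ) (v : Ed d) : Ed d := (min 1 (κ / ‖v‖)) • v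


/-- The operator `L̃_C` (the first three integrals of the coupling operator `L̃`)
applied to `h_f(x,y) = f(|x−y|)`, whose gradients are
`∇_x h_f(x,y) = f'(|x−y|)(x−y)/|x−y| = −∇_y h_f(x,y)`. -/
def LCdist {d : ℕ} (ν : Measure (Ed d)) (c : Ed d → Ed d → ℝ) (κ : ℝ)
    (f : ℝ → ℝ) (x y : Ed d) : ℝ :=
  (1 / 2) * ∫ z, (f ‖x + z - (y + z + kap κ (x - y))‖ - f ‖x - y‖
      - (if ‖z‖ ≤ 1 then (deriv f ‖x - y‖ / ‖x - y‖) * ⟪x - y, z⟫ else 0)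
      - (if ‖z + kap κ (x - y)‖ ≤ 1 then
          -((deriv f ‖x - y‖ / ‖x - y‖) * ⟪x - y, z + kap κ (x - y)⟫) else 0))
      ∂(muXYU ν c x y (kap κ (y - x)))
  + (1 / 2) * ∫ z, (f ‖x + z - (y + z + kap κ (y - x))‖ - f ‖x - y‖
      - (if ‖z‖ ≤ 1 then (deriv f ‖x - y‖ / ‖x - y‖) * ⟪x - y, z⟫ else 0)
      - (if ‖z + kap κ (y - x)‖ ≤ 1 then
          -((deriv f ‖x - y‖ / ‖x - y‖) * ⟪x - y, z + kap κ (y - x)⟫) else 0))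
      ∂(muXYU ν c x y (kap κ (x - y)))
  + (∫ z, (f ‖x + z - (y + z)‖ - f ‖x - y‖
      - (if ‖z‖ ≤ 1 then (deriv f ‖x - y‖ / ‖x - y‖) * ⟪x - y, z⟫ else 0)
      - (if ‖z‖ ≤ 1 then -((deriv f ‖x - y‖ / ‖x - y‖) * ⟪x - y, z⟫) else 0))
      ∂(nuTilde ν c x y - (2⁻¹ : ℝ≥0∞) • muXYU ν c x y (kap κ (x - y))
          - (2⁻¹ : ℝ≥0∞) • muXYU ν c x y (kap κ (y - x))))

/-- The operator `L̃_R` (the last two integrals of the coupling operator `L̃`)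
applied to `h_f(x,y) = f(|x−y|)`. -/
def LRdist {d : ℕ} (ν : Measure (Ed d)) (c : Ed d → Ed d → ℝ)
    (f : ℝ → ℝ) (x y : Ed d) : ℝ :=
  (∫ z, (f ‖x + z - y‖ - f ‖x - y‖
      - (if ‖z‖ ≤ 1 then (deriv f ‖x - y‖ / ‖x - y‖) * ⟪x - y, z⟫ else 0))
      * ctilde c x y z ∂ν)
  + (∫ z, (f ‖x - (y + z)‖ - f ‖x - y‖
      - (if ‖z‖ ≤ 1 then -((deriv f ‖x - y‖ / ‖x - y‖) * ⟪x - y, z⟫) else 0))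
      * ctilde c y x z ∂ν)

/-- `J(r) := inf_{x,y : |x−y| = r} μ_{x,y,x−y}(ℝ^d)`. -/
def Jfun (d : ℕ) (ν : Measure (Ed d)) (c : Ed d → Ed d → ℝ) (r : ℝ) : ℝ :=
  sInf {m : ℝ | ∃ x y : Ed d, ‖x - y‖ = r ∧ m = (muXYU ν c x y (x - y) Set.univ).toReal}



set_option linter.unusedSectionVars false

lemma levy_tail {d : ℕ} {ν : Measure (Ed d)} (hν : IsLevyMeasure ν) {ε : ℝ} (hε : 0 < ε) :
    ν {z : Ed d | ε ≤ ‖z‖} < ⊤ := by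
  set S : Set (Ed d) := {z | ε ≤ ‖z‖}
  have hS : MeasurableSet S := measurableSet_le measurable_const measurable_norm
  have hm : (0:ℝ) < min 1 (ε^2) := lt_min one_pos (by positivity)
  have key : ENNReal.ofReal (min 1 (ε^2)) * ν S ≤ ∫⁻ z, ENNReal.ofReal (min 1 (‖z‖ ^ 2)) ∂ν := by
    rw [← setLIntegral_const S _]
    calc ∫⁻ z in S, ENNReal.ofReal (min 1 (ε^2)) ∂ν
        ≤ ∫⁻ z in S, ENNReal.ofReal (min 1 (‖z‖ ^ 2)) ∂ν := by
          refine setLIntegral_mono (by fun_prop) (fun z hz => ?_)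
          exact ENNReal.ofReal_le_ofReal (min_le_min le_rfl (by
            have : ε ≤ ‖z‖ := hz
            nlinarith [norm_nonneg z]))
      _ ≤ _ := setLIntegral_le_lintegral _ _
  by_contra h
  push_neg at h
  rw [top_le_iff] at h
  rw [h, ENNReal.mul_top (by simp [ENNReal.ofReal_eq_zero, not_le, hm, hε, hε.ne'])] at key
  exact absurd (top_le_iff.mp key) (by exact fun he => absurd he (ne_of_lt hν.2) )

example : True := trivial

lemma nuShift_univ_lt_top {d : ℕ} {ν : Measure (Ed d)} (hν : IsLevyMeasure ν)
    {u : Ed d} (hu : u ≠ 0) : nuShift ν u Set.univ < ⊤ := by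
  have hu' : (0:ℝ) < ‖u‖ / 2 := by have := norm_pos_iff.mpr hu; linarith
  set A : Set (Ed d) := {z | ‖z‖ < ‖u‖ / 2}
  have hle1 : nuShift ν u ≤ ν := inf_le_left
  have hle2 : nuShift ν u ≤ ν.map (fun w => w + u) := inf_le_right
  have htail := levy_tail hν hu'
  have hAm : MeasurableSet A := measurableSet_lt measurable_norm measurable_const
  have h1 : nuShift ν u A ≤ ν {z : Ed d | ‖u‖/2 ≤ ‖z‖} := by
    refine le_trans (hle2 A) ?_
    rw [Measure.map_apply (measurable_add_const u) hAm]
    refine measure_mono (fun z hz => ?_)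
    simp only [Set.mem_preimage, Set.mem_setOf_eq, A] at hz ⊢
    have := norm_add_le z u  -- not directly; use reverse triangle
    have h2 : ‖u‖ ≤ ‖z + u‖ + ‖z‖ := by
      calc ‖u‖ = ‖(z + u) - z‖ := by rw [add_sub_cancel_left]
        _ ≤ ‖z + u‖ + ‖z‖ := norm_sub_le _ _
    linarith
  have h2 : nuShift ν u Aᶜ ≤ ν {z : Ed d | ‖u‖/2 ≤ ‖z‖} := by
    refine le_trans (hle1 Aᶜ) (measure_mono (fun z hz => ?_))
    simpa [A, not_lt] using hz
  calc nuShift ν u Set.univ ≤ nuShift ν u A + nuShift ν u Aᶜ := by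
        rw [← Set.union_compl_self A]; exact measure_union_le _ _
    _ ≤ ν {z : Ed d | ‖u‖/2 ≤ ‖z‖} + ν {z : Ed d | ‖u‖/2 ≤ ‖z‖} := add_le_add h1 h2
    _ < ⊤ := by exact ENNReal.add_lt_top.mpr ⟨htail, htail⟩

lemma muXYU_univ_lt_top {d : ℕ} {ν : Measure (Ed d)} (hν : IsLevyMeasure ν)
    {c : Ed d → Ed d → ℝ} {cUp : ℝ} (hc : ∀ x z, c x z ≤ cUp)
    (x y : Ed d) {u : Ed d} (hu : u ≠ 0) : muXYU ν c x y u Set.univ < ⊤ := by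
  rw [muXYU, withDensity_apply _ MeasurableSet.univ, Measure.restrict_univ]
  calc ∫⁻ z, ENNReal.ofReal (cmin c x y u z) ∂(nuShift ν u)
      ≤ ∫⁻ _, ENNReal.ofReal cUp ∂(nuShift ν u) := by
        refine lintegral_mono (fun z => ENNReal.ofReal_le_ofReal ?_)
        exact le_trans (min_le_left _ _) (le_trans (min_le_left _ _) (hc x z))
    _ = ENNReal.ofReal cUp * nuShift ν u Set.univ := by rw [lintegral_const]
    _ < ⊤ := ENNReal.mul_lt_top ENNReal.ofReal_lt_top (nuShift_univ_lt_top hν hu)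

lemma map_inf_equiv {α β : Type*} [MeasurableSpace α] [MeasurableSpace β]
    (e : α ≃ᵐ β) (μ ν : Measure α) : (μ ⊓ ν).map e = μ.map e ⊓ ν.map e := by
  apply le_antisymm
  · exact le_inf (Measure.map_mono inf_le_left e.measurable)
      (Measure.map_mono inf_le_right e.measurable)
  · have h : ((μ.map e ⊓ ν.map e).map e.symm).map e = μ.map e ⊓ ν.map e := by
      rw [Measure.map_map e.measurable e.symm.measurable]
      simp [Function.comp_def]
    calc μ.map e ⊓ ν.map e = ((μ.map e ⊓ ν.map e).map e.symm).map e := h.symm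
      _ ≤ (μ ⊓ ν).map e := by
          refine Measure.map_mono (le_inf ?_ ?_) e.measurable
          · calc (μ.map e ⊓ ν.map e).map e.symm ≤ (μ.map e).map e.symm :=
                Measure.map_mono inf_le_left e.symm.measurable
              _ = μ := by rw [Measure.map_map e.symm.measurable e.measurable]; simp [Function.comp_def]
          · calc (μ.map e ⊓ ν.map e).map e.symm ≤ (ν.map e).map e.symm :=
                Measure.map_mono inf_le_right e.symm.measurable
              _ = ν := by rw [Measure.map_map e.symm.measurable e.measurable]; simp [Function.comp_def]

lemma map_withDensity_equiv {α β : Type*} [MeasurableSpace α] [MeasurableSpace β]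
    (e : α ≃ᵐ β) (μ : Measure α) (g : α → ℝ≥0∞) (hg : Measurable g) :
    (μ.withDensity g).map e = (μ.map e).withDensity (g ∘ e.symm) := by
  ext s hs
  rw [Measure.map_apply e.measurable hs, withDensity_apply _ (e.measurable hs),
    withDensity_apply _ hs, setLIntegral_map hs (hg.comp e.symm.measurable) e.measurable]
  simp

lemma cmin_continuous {d : ℕ} {c : Ed d → Ed d → ℝ}
    (hc : Continuous (fun p : Ed d × Ed d => c p.1 p.2)) (x y u : Ed d) :
    Continuous (fun z => cmin c x y u z) := by
  have h : ∀ w : Ed d, Continuous (fun z : Ed d => c w z) := fun w =>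
    hc.comp (continuous_const.prodMk continuous_id)
  have h2 : ∀ w : Ed d, Continuous (fun z : Ed d => c w (z - u)) := fun w =>
    (h w).comp (continuous_id.sub continuous_const)
  exact ((h x).min (h y)).min ((h2 x).min (h2 y))

lemma nuShift_map {d : ℕ} (ν : Measure (Ed d)) (u : Ed d) :
    (nuShift ν u).map (MeasurableEquiv.addRight (-u)) = nuShift ν (-u) := by
  rw [nuShift, map_inf_equiv]
  have h1 : ν.map (MeasurableEquiv.addRight (-u)) = ν.map (fun w => w + (-u)) := by
    rfl
  have h2 : (ν.map (fun w => w + u)).map (MeasurableEquiv.addRight (-u)) = ν := by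
    rw [Measure.map_map (MeasurableEquiv.addRight (-u)).measurable (measurable_add_const u)]
    have : (⇑(MeasurableEquiv.addRight (-u)) ∘ fun w => w + u) = id := by
      funext w; simp [MeasurableEquiv.addRight]
    rw [this, Measure.map_id]
  rw [h1, h2, nuShift, inf_comm]

lemma muXYU_map {d : ℕ} (ν : Measure (Ed d)) {c : Ed d → Ed d → ℝ}
    (hc : Continuous (fun p : Ed d × Ed d => c p.1 p.2)) (x y u : Ed d) :
    (muXYU ν c x y u).map (MeasurableEquiv.addRight (-u)) = muXYU ν c x y (-u) := by
  rw [muXYU, map_withDensity_equiv _ _ _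
    (by exact (ENNReal.continuous_ofReal.comp (cmin_continuous hc x y u)).measurable),
    nuShift_map, muXYU]
  congr 1
  funext w
  have hsymm : (MeasurableEquiv.addRight (-u)).symm w = w + u := by
    simp [MeasurableEquiv.addRight]
  simp only [Function.comp_apply, hsymm]
  congr 1
  simp only [cmin, add_sub_cancel_right, sub_neg_eq_add]
  rw [min_comm]


section Calc
variable {f : ℝ → ℝ}
  (hf_cont : ContinuousOn f (Set.Ici 0))
  (hf_smooth : ContDiffOn ℝ 2 f (Set.Ioi 0))
  (hf'' : ∀ r : ℝ, 0 < r → r ≤ 2 → deriv (deriv f) r ≤ 0)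

include hf_cont hf_smooth in
lemma f_mvt : ∀ a b : ℝ, 0 ≤ a → a < b →
    ∃ ξ ∈ Set.Ioo a b, f b - f a = deriv f ξ * (b - a) := by
  intro a b ha hab
  have hC : ContinuousOn f (Set.Icc a b) :=
    hf_cont.mono (fun t ht => le_trans ha ht.1)
  have hD : DifferentiableOn ℝ f (Set.Ioo a b) :=
    (hf_smooth.differentiableOn (by norm_num)).mono
      (fun t ht => lt_of_le_of_lt ha ht.1)
  obtain ⟨ξ, hξ, h⟩ := exists_deriv_eq_slope f hab hC hD
  exact ⟨ξ, hξ, by rw [h, div_mul_cancel₀ _ (sub_ne_zero.mpr hab.ne')]⟩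

include hf_cont hf_smooth hf'' in
lemma deriv_f_anti : ∀ a b : ℝ, 0 < a → a ≤ b → b ≤ 2 → deriv f b ≤ deriv f a := by
  intro a b ha hab hb2
  have hio : Set.Ioc (0:ℝ) 2 ⊆ Set.Ioi 0 := fun t ht => ht.1
  have hd1 : ContDiffOn ℝ 1 (deriv f) (Set.Ioi 0) :=
    hf_smooth.deriv_of_isOpen isOpen_Ioi (by norm_num)
  have hcont : ContinuousOn (deriv f) (Set.Ioc 0 2) :=
    (hd1.continuousOn).mono hio
  have hdiff : DifferentiableOn ℝ (deriv f) (interior (Set.Ioc (0:ℝ) 2)) := by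
    rw [interior_Ioc]
    exact (hd1.differentiableOn (by norm_num)).mono (fun t ht => ht.1)
  have hanti : AntitoneOn (deriv f) (Set.Ioc 0 2) := by
    refine antitoneOn_of_deriv_nonpos (convex_Ioc 0 2) hcont hdiff (fun t ht => ?_)
    rw [interior_Ioc] at ht
    exact hf'' t ht.1 ht.2.le
  exact hanti ⟨ha, le_trans hab hb2⟩ ⟨lt_of_lt_of_le ha hab, hb2⟩ hab

include hf_cont hf_smooth hf'' in
lemma f_concave_ineq : ∀ r s : ℝ, 0 < r → r ≤ 1 → 0 ≤ s → s ≤ 2 →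
    f s - f r ≤ deriv f r * (s - r) := by
  intro r s hr hr1 hs hs2
  rcases lt_trichotomy s r with h | h | h
  · obtain ⟨ξ, hξ, heq⟩ := f_mvt hf_cont hf_smooth s r hs h
    have hξr : deriv f r ≤ deriv f ξ :=
      deriv_f_anti hf_cont hf_smooth hf'' ξ r (lt_of_le_of_lt hs hξ.1) hξ.2.le (le_trans hr1 one_le_two)
    nlinarith [hξ.1, hξ.2]
  · simp [h]
  · obtain ⟨ξ, hξ, heq⟩ := f_mvt hf_cont hf_smooth r s (le_of_lt hr) h
    have hξr : deriv f ξ ≤ deriv f r :=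
      deriv_f_anti hf_cont hf_smooth hf'' r ξ hr hξ.1.le (le_trans hξ.2.le hs2)
    nlinarith [hξ.1, hξ.2]
end Calc

section D
variable {f : ℝ → ℝ}
  (hf_cont : ContinuousOn f (Set.Ici 0))
  (hf_smooth : ContDiffOn ℝ 2 f (Set.Ioi 0))
  (hf'' : ∀ r : ℝ, 0 < r → r ≤ 2 → deriv (deriv f) r ≤ 0)
  (hf0 : f 0 = 0)

include hf_cont hf_smooth hf'' hf0 in
lemma f_doubling : ∀ r : ℝ, 0 < r → r ≤ 1 → f (2*r) - 2 * f r ≤ 0 := by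
  intro r hr hr1
  obtain ⟨ξ₁, hξ₁, h1⟩ := f_mvt hf_cont hf_smooth 0 r le_rfl hr
  obtain ⟨ξ₂, hξ₂, h2⟩ := f_mvt hf_cont hf_smooth r (2*r) hr.le (by linarith)
  have hanti : deriv f ξ₂ ≤ deriv f ξ₁ :=
    deriv_f_anti hf_cont hf_smooth hf'' ξ₁ ξ₂ hξ₁.1 (le_trans hξ₁.2.le hξ₂.1.le)
      (by nlinarith [hξ₂.2])
  rw [hf0] at h1
  nlinarith [hξ₁.1, hξ₁.2, hξ₂.1, hξ₂.2]
end D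



lemma integral_le_of_forall_le {α : Type*} [MeasurableSpace α] {μ : Measure α} {h G : α → ℝ}
    (hG : Integrable G μ) (hGnn : ∀ z, 0 ≤ G z) (hle : ∀ z, h z ≤ G z) :
    ∫ z, h z ∂μ ≤ ∫ z, G z ∂μ := by
  by_cases hi : Integrable h μ
  · exact integral_mono hi hG hle
  · rw [integral_undef hi]
    exact integral_nonneg hGnn

lemma inner_cut_integrable {d : ℕ} (μ : Measure (Ed d)) [IsFiniteMeasure μ] (D : ℝ) (v : Ed d) :
    Integrable (fun z : Ed d => if ‖z‖ ≤ 1 then D * ⟪v, z⟫ else 0) μ := by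
  refine Integrable.mono' (integrable_const (|D| * ‖v‖)) ?_ (Filter.Eventually.of_forall fun z => ?_)
  · refine (Measurable.ite (measurableSet_le measurable_norm measurable_const) ?_
      measurable_const).aestronglyMeasurable
    exact (continuous_const.mul (continuous_const.inner (continuous_id : Continuous (id : Ed d → Ed d)))).measurable
  · by_cases hz : ‖z‖ ≤ 1
    · simp only [hz, if_true, Real.norm_eq_abs]
      rw [abs_mul]
      have h1 : |⟪v, z⟫| ≤ ‖v‖ * ‖z‖ := abs_real_inner_le_norm v z
      have h2 : ‖v‖ * ‖z‖ ≤ ‖v‖ * 1 := by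
        exact mul_le_mul_of_nonneg_left hz (norm_nonneg v)
      calc |D| * |⟪v, z⟫| ≤ |D| * (‖v‖ * ‖z‖) := mul_le_mul_of_nonneg_left h1 (abs_nonneg D)
        _ ≤ |D| * ‖v‖ := by nlinarith [abs_nonneg D]
    · simp only [hz, if_false, norm_zero]
      positivity


lemma LC_eq {d : ℕ} {ν : Measure (Ed d)} (hν : IsLevyMeasure ν)
    {c : Ed d → Ed d → ℝ} {cUp : ℝ} (hcUp : ∀ x z, c x z ≤ cUp)
    (hc_cont : Continuous (fun p : Ed d × Ed d => c p.1 p.2))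
    {κ : ℝ} (f : ℝ → ℝ) (hf0 : f 0 = 0) {x y : Ed d}
    (hxy : 0 < ‖x - y‖) (hκ : ‖x - y‖ ≤ κ) :
    LCdist ν c κ f x y = (muXYU ν c x y (x - y) Set.univ).toReal
      * (f (2 * ‖x - y‖) - 2 * f ‖x - y‖) / 2 := by
  set r := ‖x - y‖ with hr
  set v := x - y with hv
  set u := y - x with hu
  have hv0 : v ≠ 0 := by
    intro h
    rw [hr] at hxy
    rw [h, norm_zero] at hxy
    exact lt_irrefl 0 hxy
  have hnormu : ‖u‖ = r := by rw [hu, hr, norm_sub_rev]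
  have hu0 : u ≠ 0 := by
    intro h
    rw [h, norm_zero] at hnormu
    exact hxy.ne' hnormu.symm
  have hκv : kap κ v = v := by
    rw [kap, min_eq_left (by rw [le_div_iff₀ hxy]; linarith), one_smul]
  have hκu : kap κ u = u := by
    rw [kap, hnormu, min_eq_left (by rw [le_div_iff₀ hxy]; linarith), one_smul]
  set μ₁ := muXYU ν c x y u with hμ₁
  set μ₂ := muXYU ν c x y v with hμ₂
  haveI : IsFiniteMeasure μ₁ := ⟨muXYU_univ_lt_top hν hcUp x y hu0⟩
  haveI : IsFiniteMeasure μ₂ := ⟨muXYU_univ_lt_top hν hcUp x y hv0⟩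
  have hmap : μ₁.map (MeasurableEquiv.addRight v) = μ₂ := by
    have h := muXYU_map ν hc_cont x y u
    rwa [hu, neg_sub, ← hv, ← hμ₂] at h
  have hmap2 : μ₂.map (MeasurableEquiv.addRight u) = μ₁ := by
    have h := muXYU_map ν hc_cont x y v
    rwa [hv, neg_sub, ← hu, ← hμ₁] at h
  set D := deriv f r / r with hD
  set A := fun w : Ed d => if ‖w‖ ≤ 1 then D * ⟪v, w⟫ else 0 with hA
  have hA1 : Integrable A μ₁ := inner_cut_integrable μ₁ D v
  have hA2 : Integrable A μ₂ := inner_cut_integrable μ₂ D v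
  have hcoe_v : ⇑(MeasurableEquiv.addRight v) = fun z : Ed d => z + v := rfl
  have hcoe_u : ⇑(MeasurableEquiv.addRight u) = fun z : Ed d => z + u := rfl
  have hAe1 : Integrable (fun z => A (z + v)) μ₁ := by
    have := (integrable_map_equiv (MeasurableEquiv.addRight v) A).mp (hmap ▸ hA2)
    simpa [hcoe_v, Function.comp_def] using this
  have hAe2 : Integrable (fun z => A (z + u)) μ₂ := by
    have := (integrable_map_equiv (MeasurableEquiv.addRight u) A).mp (hmap2 ▸ hA1)
    simpa [hcoe_u, Function.comp_def] using this
  have hint1 : ∫ z, A (z + v) ∂μ₁ = ∫ w, A w ∂μ₂ := by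
    rw [← hmap, integral_map_equiv]; rfl
  have hint2 : ∫ z, A (z + u) ∂μ₂ = ∫ w, A w ∂μ₁ := by
    rw [← hmap2, integral_map_equiv]; rfl
  have hm : (μ₁ Set.univ).toReal = (μ₂ Set.univ).toReal := by
    rw [← hmap, Measure.map_apply (MeasurableEquiv.addRight v).measurable MeasurableSet.univ]
    simp
  -- the three integrals
  have hthird : (∫ z, (f ‖x + z - (y + z)‖ - f ‖x - y‖
      - (if ‖z‖ ≤ 1 then (deriv f ‖x - y‖ / ‖x - y‖) * ⟪x - y, z⟫ else 0)
      - (if ‖z‖ ≤ 1 then -((deriv f ‖x - y‖ / ‖x - y‖) * ⟪x - y, z⟫) else 0))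
      ∂(nuTilde ν c x y - (2⁻¹ : ℝ≥0∞) • muXYU ν c x y (kap κ (x - y))
          - (2⁻¹ : ℝ≥0∞) • muXYU ν c x y (kap κ (y - x)))) = 0 := by
    have hfun : (fun z : Ed d => (f ‖x + z - (y + z)‖ - f ‖x - y‖
      - (if ‖z‖ ≤ 1 then (deriv f ‖x - y‖ / ‖x - y‖) * ⟪x - y, z⟫ else 0)
      - (if ‖z‖ ≤ 1 then -((deriv f ‖x - y‖ / ‖x - y‖) * ⟪x - y, z⟫) else 0)))
        = fun _ => (0:ℝ) := by
      funext z
      have hxz : x + z - (y + z) = x - y := by abel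
      rw [hxz]
      by_cases hz : ‖z‖ ≤ 1 <;> simp [hz]
    rw [hfun, integral_zero]
  have hfirst : (∫ z, (f ‖x + z - (y + z + kap κ (x - y))‖ - f ‖x - y‖
      - (if ‖z‖ ≤ 1 then (deriv f ‖x - y‖ / ‖x - y‖) * ⟪x - y, z⟫ else 0)
      - (if ‖z + kap κ (x - y)‖ ≤ 1 then
          -((deriv f ‖x - y‖ / ‖x - y‖) * ⟪x - y, z + kap κ (x - y)⟫) else 0))
      ∂(muXYU ν c x y (kap κ (y - x))))
      = (-(f r) * (μ₁ Set.univ).toReal - ∫ z, A z ∂μ₁) + ∫ w, A w ∂μ₂ := by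
    rw [hκv, hκu]
    have hfun : (fun z : Ed d => (f ‖x + z - (y + z + v)‖ - f ‖x - y‖
      - (if ‖z‖ ≤ 1 then (deriv f ‖x - y‖ / ‖x - y‖) * ⟪x - y, z⟫ else 0)
      - (if ‖z + v‖ ≤ 1 then
          -((deriv f ‖x - y‖ / ‖x - y‖) * ⟪x - y, z + v⟫) else 0)))
        = fun z => (-(f r) - A z) + A (z + v) := by
      funext z
      have hxz : x + z - (y + z + v) = (0 : Ed d) := by rw [hv]; abel
      rw [hxz, norm_zero, hf0]
      by_cases hz : ‖z‖ ≤ 1 <;> by_cases hz' : ‖z + v‖ ≤ 1 <;>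
        simp [A, hz, hz', ← hv, ← hr, ← hD] <;> ring
    have hI1 : Integrable (fun z : Ed d => -f r - A z) μ₁ := (integrable_const (-f r)).sub hA1
    rw [hfun, integral_add hI1 hAe1, integral_sub (integrable_const (-f r)) hA1,
      integral_const, hint1, smul_eq_mul, mul_comm, measureReal_def]
  have hsecond : (∫ z, (f ‖x + z - (y + z + kap κ (y - x))‖ - f ‖x - y‖
      - (if ‖z‖ ≤ 1 then (deriv f ‖x - y‖ / ‖x - y‖) * ⟪x - y, z⟫ else 0)
      - (if ‖z + kap κ (y - x)‖ ≤ 1 then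
          -((deriv f ‖x - y‖ / ‖x - y‖) * ⟪x - y, z + kap κ (y - x)⟫) else 0))
      ∂(muXYU ν c x y (kap κ (x - y))))
      = ((f (2*r) - f r) * (μ₂ Set.univ).toReal - ∫ z, A z ∂μ₂) + ∫ w, A w ∂μ₁ := by
    rw [hκv, hκu]
    have hfun : (fun z : Ed d => (f ‖x + z - (y + z + u)‖ - f ‖x - y‖
      - (if ‖z‖ ≤ 1 then (deriv f ‖x - y‖ / ‖x - y‖) * ⟪x - y, z⟫ else 0)
      - (if ‖z + u‖ ≤ 1 then
          -((deriv f ‖x - y‖ / ‖x - y‖) * ⟪x - y, z + u⟫) else 0)))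
        = fun z => ((f (2*r) - f r) - A z) + A (z + u) := by
      funext z
      have hxz : x + z - (y + z + u) = v + v := by rw [hv, hu]; abel
      have hnn : ‖v + v‖ = 2 * r := by
        have : v + v = (2:ℝ) • v := by rw [two_smul]
        rw [this, norm_smul, ← hr]
        simp [Real.norm_eq_abs]
      rw [hxz, hnn]
      by_cases hz : ‖z‖ ≤ 1 <;> by_cases hz' : ‖z + u‖ ≤ 1 <;>
        simp [A, hz, hz', ← hv, ← hr, ← hD] <;> ring
    have hI2 : Integrable (fun z : Ed d => f (2*r) - f r - A z) μ₂ :=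
      (integrable_const (f (2*r) - f r)).sub hA2
    have hfun2 : (fun z : Ed d => f (2*r) - f r - A z + A (z + u))
        = fun z => (f (2*r) - f r - A z) + A (z + u) := rfl
    rw [hfun, hfun2, integral_add hI2 hAe2, integral_sub (integrable_const (f (2*r) - f r)) hA2,
      integral_const, hint2, smul_eq_mul, mul_comm, measureReal_def]
  rw [LCdist, hthird, hfirst, hsecond, hm]
  ring

set_option maxHeartbeats 2000000

/-- Proposition 3.1(2): under the assumptions of Proposition 3.1(1) and the
additional assumption `∫_{|z|≤1} |z| ν(dz) < ∞`, for `0 < |x−y| ≤ ε₀`: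
`L̃ h_f(x,y) ≤ (1/2) J(|x−y|)(f(2|x−y|) − 2f(|x−y|))
  + 4 (∫_{|z|≤1} |c(x,z)−c(y,z)||z| ν(dz)) f'(|x−y|)
  + 2 ν({|z|>1}) (sup_{x, |z|>1} c(x,z)) ‖f‖_∞`. -/
theorem statement12 {d : ℕ} (hd : 1 ≤ d) (ν : Measure (Ed d)) (hν : IsLevyMeasure ν)
    (hν1 : ∫⁻ z in {z : Ed d | ‖z‖ ≤ 1}, ENNReal.ofReal ‖z‖ ∂ν < ⊤)
    (c : Ed d → Ed d → ℝ) (cLo cUp : ℝ) (hcLo : 0 < cLo) (hcUp : cLo ≤ cUp)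
    (hc_cont : Continuous (fun p : Ed d × Ed d => c p.1 p.2))
    (hc_bound : ∀ x z, cLo ≤ c x z ∧ c x z ≤ cUp)
    (ε₀ κ : ℝ) (hε₀ : 0 < ε₀) (hε₀κ : ε₀ ≤ κ) (hκ1 : κ ≤ 1)
    (f : ℝ → ℝ) (Mf : ℝ)
    (hf_bdd : ∀ r : ℝ, 0 ≤ r → |f r| ≤ Mf)
    (hf_cont : ContinuousOn f (Set.Ici 0))
    (hf0 : f 0 = 0)
    (hf_smooth : ContDiffOn ℝ 2 f (Set.Ioi 0))
    (hf' : ∀ r : ℝ, 0 < r → r ≤ 2 → 0 ≤ deriv f r)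
    (hf'' : ∀ r : ℝ, 0 < r → r ≤ 2 → deriv (deriv f) r ≤ 0)
    (Mc : ℝ) (hMc : ∀ (x z : Ed d), 1 < ‖z‖ → c x z ≤ Mc)
    (x y : Ed d) (hxy : 0 < ‖x - y‖) (hxy' : ‖x - y‖ ≤ ε₀) :
    LCdist ν c κ f x y + LRdist ν c f x y
      ≤ (1 / 2) * Jfun d ν c ‖x - y‖ * (f (2 * ‖x - y‖) - 2 * f ‖x - y‖)
        + 4 * (∫ z in {z : Ed d | ‖z‖ ≤ 1}, |c x z - c y z| * ‖z‖ ∂ν)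
          * deriv f ‖x - y‖
        + 2 * (ν {z : Ed d | 1 < ‖z‖}).toReal * Mc * Mf := by
  have hcUp : ∀ x z, c x z ≤ cUp := fun x z => (hc_bound x z).2
  have hcLo' : ∀ x z, cLo ≤ c x z := fun x z => (hc_bound x z).1
  have hr1 : ‖x - y‖ ≤ 1 := le_trans hxy' (le_trans hε₀κ hκ1)
  have hr2 : ‖x - y‖ ≤ 2 := by linarith
  have hf'r : 0 ≤ deriv f ‖x - y‖ := hf' _ hxy hr2
  have hMf0 : 0 ≤ Mf := by
    have := hf_bdd 0 le_rfl
    rw [hf0] at this; simpa using this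
  have hcx : ∀ w : Ed d, Continuous (fun z : Ed d => c w z) := fun w =>
    hc_cont.comp (continuous_const.prodMk continuous_id)
  -- basic ctilde facts
  have hct0 : ∀ x' y' z : Ed d, 0 ≤ ctilde c x' y' z := fun x' y' z => by
    rw [ctilde]; simp [min_le_left]
  have hctle : ∀ z : Ed d, ctilde c x y z ≤ |c x z - c y z| := fun z => by
    rw [ctilde]
    rcases le_total (c x z) (c y z) with h | h
    · rw [min_eq_left h]; simp [abs_nonneg]
    · rw [min_eq_right h, abs_of_nonneg (by linarith)]
  have hctle' : ∀ z : Ed d, ctilde c y x z ≤ |c x z - c y z| := fun z => by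
    rw [ctilde]
    rcases le_total (c x z) (c y z) with h | h
    · rw [min_eq_right h, abs_of_nonpos (by linarith)]; linarith
    · rw [min_eq_left h]; simp [abs_nonneg]
  have hctsum : ∀ z : Ed d, ctilde c x y z + ctilde c y x z = |c x z - c y z| := fun z => by
    rw [ctilde, ctilde, min_comm (c y z) (c x z)]
    rcases le_total (c x z) (c y z) with h | h
    · rw [min_eq_left h, abs_of_nonpos (by linarith)]; ring
    · rw [min_eq_right h, abs_of_nonneg (by linarith)]; ring
  have hctub : ∀ z : Ed d, ctilde c x y z ≤ cUp := fun z => by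
    rw [ctilde]
    have := hcUp x z
    have : cLo ≤ min (c x z) (c y z) := le_min (hcLo' x z) (hcLo' y z)
    linarith [hcUp x z]
  have hctub' : ∀ z : Ed d, ctilde c y x z ≤ cUp := fun z => by
    rw [ctilde]
    have : cLo ≤ min (c y z) (c x z) := le_min (hcLo' y z) (hcLo' x z)
    linarith [hcUp y z]
  ------------------------------------------------------------------
  -- Part 1 : the LC term
  ------------------------------------------------------------------
  set m : ℝ := (muXYU ν c x y (x - y) Set.univ).toReal with hm
  have hLC : LCdist ν c κ f x y = m * (f (2 * ‖x - y‖) - 2 * f ‖x - y‖) / 2 :=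
    LC_eq hν hcUp hc_cont f hf0 hxy (le_trans hxy' hε₀κ)
  have hJle : Jfun d ν c ‖x - y‖ ≤ m := by
    refine csInf_le ⟨0, fun a ha => ?_⟩ ⟨x, y, rfl, rfl⟩
    obtain ⟨x', y', _, ha⟩ := ha
    rw [ha]; exact ENNReal.toReal_nonneg
  have hdoub : f (2 * ‖x - y‖) - 2 * f ‖x - y‖ ≤ 0 :=
    f_doubling hf_cont hf_smooth hf'' hf0 ‖x - y‖ hxy hr1
  have hLCle : LCdist ν c κ f x y
      ≤ (1 / 2) * Jfun d ν c ‖x - y‖ * (f (2 * ‖x - y‖) - 2 * f ‖x - y‖) := by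
    rw [hLC]
    have := mul_le_mul_of_nonpos_right hJle hdoub
    linarith
  ------------------------------------------------------------------
  -- Part 2 : the LR term
  ------------------------------------------------------------------
  set S : Set (Ed d) := {z : Ed d | ‖z‖ ≤ 1} with hS
  have hSm : MeasurableSet S := measurableSet_le measurable_norm measurable_const
  have hScEq : Sᶜ = {z : Ed d | 1 < ‖z‖} := by ext z; simp [hS, not_le]
  have hνSc : ν Sᶜ < ⊤ := by
    have hsub : Sᶜ ⊆ {z : Ed d | 1 ≤ ‖z‖} := by
      rw [hScEq]; intro z hz; exact le_of_lt (by exact hz : 1 < ‖z‖)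
    exact lt_of_le_of_lt (measure_mono hsub) (levy_tail hν one_pos)
  haveI hfinSc : IsFiniteMeasure (ν.restrict Sᶜ) :=
    ⟨by rw [Measure.restrict_apply_univ]; exact hνSc⟩
  -- integrability of the norm on S
  have hInt_norm : IntegrableOn (fun z : Ed d => ‖z‖) S ν := by
    refine ⟨measurable_norm.aestronglyMeasurable, ?_⟩
    rw [hasFiniteIntegral_iff_ofReal (Filter.Eventually.of_forall fun z => norm_nonneg z)]
    exact hν1
  -- the dominating functions
  set g₁ : Ed d → ℝ := fun z => 2 * deriv f ‖x - y‖ * (|c x z - c y z| * ‖z‖) with hg₁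
  set g₂ : Ed d → ℝ := fun z => 2 * Mf * ctilde c x y z with hg₂
  set g₂' : Ed d → ℝ := fun z => 2 * Mf * ctilde c y x z with hg₂'
  have hg₁cont : Continuous g₁ :=
    continuous_const.mul ((((hcx x).sub (hcx y)).abs).mul continuous_norm)
  have hg₂cont : Continuous g₂ :=
    continuous_const.mul ((hcx x).sub ((hcx x).min (hcx y)))
  have hg₂'cont : Continuous g₂' :=
    continuous_const.mul ((hcx y).sub ((hcx y).min (hcx x)))
  have hg₁int : IntegrableOn g₁ S ν := by
    refine Integrable.mono' (hInt_norm.const_mul (2 * deriv f ‖x - y‖ * cUp))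
      hg₁cont.aestronglyMeasurable (Filter.Eventually.of_forall fun z => ?_)
    rw [hg₁, Real.norm_eq_abs]
    have h1 : |c x z - c y z| ≤ cUp := by
      have := hcLo' x z; have := hcLo' y z; have := hcUp x z; have := hcUp y z
      rw [abs_le]; constructor <;> linarith
    rw [abs_of_nonneg (by positivity)]
    have h2 := mul_le_mul_of_nonneg_right h1 (norm_nonneg z)
    show 2 * deriv f ‖x - y‖ * (|c x z - c y z| * ‖z‖) ≤ 2 * deriv f ‖x - y‖ * cUp * ‖z‖
    calc 2 * deriv f ‖x - y‖ * (|c x z - c y z| * ‖z‖)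
        ≤ 2 * deriv f ‖x - y‖ * (cUp * ‖z‖) := mul_le_mul_of_nonneg_left h2 (by linarith)
      _ = 2 * deriv f ‖x - y‖ * cUp * ‖z‖ := by ring
  have hg₂int : IntegrableOn g₂ Sᶜ ν := by
    refine Integrable.mono' (integrable_const (2 * Mf * cUp))
      hg₂cont.aestronglyMeasurable (Filter.Eventually.of_forall fun z => ?_)
    rw [hg₂, Real.norm_eq_abs,
      abs_of_nonneg (mul_nonneg (by linarith) (hct0 x y z))]
    exact mul_le_mul_of_nonneg_left (hctub z) (by linarith)
  have hg₂'int : IntegrableOn g₂' Sᶜ ν := by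
    refine Integrable.mono' (integrable_const (2 * Mf * cUp))
      hg₂'cont.aestronglyMeasurable (Filter.Eventually.of_forall fun z => ?_)
    rw [hg₂', Real.norm_eq_abs,
      abs_of_nonneg (mul_nonneg (by linarith) (hct0 y x z))]
    exact mul_le_mul_of_nonneg_left (hctub' z) (by linarith)
  -- integrability of ctilde on the tail
  have hct_int : IntegrableOn (fun z => ctilde c x y z) Sᶜ ν := by
    refine Integrable.mono' (integrable_const cUp)
      ((hcx x).sub ((hcx x).min (hcx y))).aestronglyMeasurable
      (Filter.Eventually.of_forall fun z => ?_)
    rw [Real.norm_eq_abs, abs_of_nonneg (hct0 x y z)]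
    exact hctub z
  have hct'_int : IntegrableOn (fun z => ctilde c y x z) Sᶜ ν := by
    refine Integrable.mono' (integrable_const cUp)
      ((hcx y).sub ((hcx y).min (hcx x))).aestronglyMeasurable
      (Filter.Eventually.of_forall fun z => ?_)
    rw [Real.norm_eq_abs, abs_of_nonneg (hct0 y x z)]
    exact hctub' z
  -- nonnegativity of the dominating functions
  have hg₁nn : ∀ z, 0 ≤ g₁ z := fun z => by
    rw [hg₁]; exact mul_nonneg (by linarith) (by positivity)
  have hg₂nn : ∀ z, 0 ≤ g₂ z := fun z => by
    rw [hg₂]; exact mul_nonneg (by linarith) (hct0 x y z)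
  have hg₂'nn : ∀ z, 0 ≤ g₂' z := fun z => by
    rw [hg₂']; exact mul_nonneg (by linarith) (hct0 y x z)
  -- the dominating functions as indicators
  set G₁ : Ed d → ℝ := fun z => S.indicator g₁ z + Sᶜ.indicator g₂ z with hG₁
  set G₂ : Ed d → ℝ := fun z => S.indicator g₁ z + Sᶜ.indicator g₂' z with hG₂
  have hG₁int : Integrable G₁ ν :=
    (hg₁int.integrable_indicator hSm).add (hg₂int.integrable_indicator hSm.compl)
  have hG₂int : Integrable G₂ ν :=
    (hg₁int.integrable_indicator hSm).add (hg₂'int.integrable_indicator hSm.compl)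
  have hG₁nn : ∀ z, 0 ≤ G₁ z := fun z =>
    add_nonneg (Set.indicator_nonneg (fun w _ => hg₁nn w) z)
      (Set.indicator_nonneg (fun w _ => hg₂nn w) z)
  have hG₂nn : ∀ z, 0 ≤ G₂ z := fun z =>
    add_nonneg (Set.indicator_nonneg (fun w _ => hg₁nn w) z)
      (Set.indicator_nonneg (fun w _ => hg₂'nn w) z)
  have hG₁val : ∫ z, G₁ z ∂ν
      = 2 * deriv f ‖x - y‖ * (∫ z in S, |c x z - c y z| * ‖z‖ ∂ν)
        + 2 * Mf * (∫ z in Sᶜ, ctilde c x y z ∂ν) := by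
    simp only [hG₁]
    rw [integral_add (hg₁int.integrable_indicator hSm)
      (hg₂int.integrable_indicator hSm.compl), integral_indicator hSm,
      integral_indicator hSm.compl]
    simp only [hg₁, hg₂]
    rw [integral_const_mul, integral_const_mul]
  have hG₂val : ∫ z, G₂ z ∂ν
      = 2 * deriv f ‖x - y‖ * (∫ z in S, |c x z - c y z| * ‖z‖ ∂ν)
        + 2 * Mf * (∫ z in Sᶜ, ctilde c y x z ∂ν) := by
    simp only [hG₂]
    rw [integral_add (hg₁int.integrable_indicator hSm)
      (hg₂'int.integrable_indicator hSm.compl), integral_indicator hSm,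
      integral_indicator hSm.compl]
    simp only [hg₁, hg₂']
    rw [integral_const_mul, integral_const_mul]
  -- pointwise bound, first integrand
  have hle₁ : ∀ z : Ed d, (f ‖x + z - y‖ - f ‖x - y‖
      - (if ‖z‖ ≤ 1 then (deriv f ‖x - y‖ / ‖x - y‖) * ⟪x - y, z⟫ else 0))
      * ctilde c x y z ≤ G₁ z := by
    intro z
    by_cases hz : ‖z‖ ≤ 1
    · have hzS : z ∈ S := hz
      simp only [hG₁]
      rw [Set.indicator_of_mem hzS, Set.indicator_of_notMem (by simp [hzS]), add_zero,
        if_pos hz]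
      have hxzy : x + z - y = x - y + z := by abel
      rw [hxzy]
      have hs2 : ‖x - y + z‖ ≤ 2 := le_trans (norm_add_le _ _) (by linarith)
      have hconc := f_concave_ineq hf_cont hf_smooth hf'' ‖x - y‖ ‖x - y + z‖ hxy hr1
        (norm_nonneg _) hs2
      have hsr : ‖x - y + z‖ - ‖x - y‖ ≤ ‖z‖ := by
        have := norm_add_le (x - y) z; linarith
      have hinner : |⟪x - y, z⟫| ≤ ‖x - y‖ * ‖z‖ := abs_real_inner_le_norm _ _
      have hDpos : 0 ≤ deriv f ‖x - y‖ / ‖x - y‖ := div_nonneg hf'r hxy.le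
      have habs : |(deriv f ‖x - y‖ / ‖x - y‖) * ⟪x - y, z⟫| ≤ deriv f ‖x - y‖ * ‖z‖ := by
        rw [abs_mul, abs_of_nonneg hDpos]
        calc (deriv f ‖x - y‖ / ‖x - y‖) * |⟪x - y, z⟫|
            ≤ (deriv f ‖x - y‖ / ‖x - y‖) * (‖x - y‖ * ‖z‖) :=
              mul_le_mul_of_nonneg_left hinner hDpos
          _ = deriv f ‖x - y‖ * ‖z‖ := by field_simp
      have hbr : f ‖x - y + z‖ - f ‖x - y‖ - (deriv f ‖x - y‖ / ‖x - y‖) * ⟪x - y, z⟫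
          ≤ 2 * deriv f ‖x - y‖ * ‖z‖ := by
        have h1 : deriv f ‖x - y‖ * (‖x - y + z‖ - ‖x - y‖) ≤ deriv f ‖x - y‖ * ‖z‖ :=
          mul_le_mul_of_nonneg_left hsr hf'r
        have h2 := (abs_le.mp habs).1
        linarith
      rcases le_or_gt (f ‖x - y + z‖ - f ‖x - y‖
          - (deriv f ‖x - y‖ / ‖x - y‖) * ⟪x - y, z⟫) 0 with hneg | hpos
      · have hp : (f ‖x - y + z‖ - f ‖x - y‖ - (deriv f ‖x - y‖ / ‖x - y‖) * ⟪x - y, z⟫)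
            * ctilde c x y z ≤ 0 := mul_nonpos_of_nonpos_of_nonneg hneg (hct0 x y z)
        exact le_trans hp (hg₁nn z)
      · calc (f ‖x - y + z‖ - f ‖x - y‖ - (deriv f ‖x - y‖ / ‖x - y‖) * ⟪x - y, z⟫)
            * ctilde c x y z
            ≤ (f ‖x - y + z‖ - f ‖x - y‖ - (deriv f ‖x - y‖ / ‖x - y‖) * ⟪x - y, z⟫)
              * |c x z - c y z| := mul_le_mul_of_nonneg_left (hctle z) hpos.le
          _ ≤ (2 * deriv f ‖x - y‖ * ‖z‖) * |c x z - c y z| :=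
              mul_le_mul_of_nonneg_right hbr (abs_nonneg _)
          _ = g₁ z := by rw [hg₁]; ring
    · have hzS : z ∈ Sᶜ := by simp [hS, hz]
      simp only [hG₁]
      rw [Set.indicator_of_notMem (by simpa [hS] using hz), Set.indicator_of_mem hzS,
        zero_add, if_neg hz]
      have b1 := abs_le.mp (hf_bdd ‖x + z - y‖ (norm_nonneg _))
      have b2 := abs_le.mp (hf_bdd ‖x - y‖ (norm_nonneg _))
      have hb : f ‖x + z - y‖ - f ‖x - y‖ - 0 ≤ 2 * Mf := by linarith
      calc (f ‖x + z - y‖ - f ‖x - y‖ - 0) * ctilde c x y z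
          ≤ (2 * Mf) * ctilde c x y z := mul_le_mul_of_nonneg_right hb (hct0 x y z)
        _ = g₂ z := by rw [hg₂]
  -- pointwise bound, second integrand
  have hle₂ : ∀ z : Ed d, (f ‖x - (y + z)‖ - f ‖x - y‖
      - (if ‖z‖ ≤ 1 then -((deriv f ‖x - y‖ / ‖x - y‖) * ⟪x - y, z⟫) else 0))
      * ctilde c y x z ≤ G₂ z := by
    intro z
    by_cases hz : ‖z‖ ≤ 1
    · have hzS : z ∈ S := hz
      simp only [hG₂]
      rw [Set.indicator_of_mem hzS, Set.indicator_of_notMem (by simp [hzS]), add_zero,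
        if_pos hz]
      have hxzy : x - (y + z) = x - y - z := by abel
      rw [hxzy]
      have hs2 : ‖x - y - z‖ ≤ 2 := le_trans (norm_sub_le _ _) (by linarith)
      have hconc := f_concave_ineq hf_cont hf_smooth hf'' ‖x - y‖ ‖x - y - z‖ hxy hr1
        (norm_nonneg _) hs2
      have hsr : ‖x - y - z‖ - ‖x - y‖ ≤ ‖z‖ := by
        have := norm_sub_le (x - y) z; linarith
      have hinner : |⟪x - y, z⟫| ≤ ‖x - y‖ * ‖z‖ := abs_real_inner_le_norm _ _
      have hDpos : 0 ≤ deriv f ‖x - y‖ / ‖x - y‖ := div_nonneg hf'r hxy.le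
      have habs : |(deriv f ‖x - y‖ / ‖x - y‖) * ⟪x - y, z⟫| ≤ deriv f ‖x - y‖ * ‖z‖ := by
        rw [abs_mul, abs_of_nonneg hDpos]
        calc (deriv f ‖x - y‖ / ‖x - y‖) * |⟪x - y, z⟫|
            ≤ (deriv f ‖x - y‖ / ‖x - y‖) * (‖x - y‖ * ‖z‖) :=
              mul_le_mul_of_nonneg_left hinner hDpos
          _ = deriv f ‖x - y‖ * ‖z‖ := by field_simp
      have hbr : f ‖x - y - z‖ - f ‖x - y‖ - (-((deriv f ‖x - y‖ / ‖x - y‖) * ⟪x - y, z⟫))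
          ≤ 2 * deriv f ‖x - y‖ * ‖z‖ := by
        have h1 : deriv f ‖x - y‖ * (‖x - y - z‖ - ‖x - y‖) ≤ deriv f ‖x - y‖ * ‖z‖ :=
          mul_le_mul_of_nonneg_left hsr hf'r
        have h2 := (abs_le.mp habs).2
        linarith
      rcases le_or_gt (f ‖x - y - z‖ - f ‖x - y‖
          - (-((deriv f ‖x - y‖ / ‖x - y‖) * ⟪x - y, z⟫))) 0 with hneg | hpos
      · have hp : (f ‖x - y - z‖ - f ‖x - y‖ - (-((deriv f ‖x - y‖ / ‖x - y‖) * ⟪x - y, z⟫)))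
            * ctilde c y x z ≤ 0 := mul_nonpos_of_nonpos_of_nonneg hneg (hct0 y x z)
        exact le_trans hp (hg₁nn z)
      · calc (f ‖x - y - z‖ - f ‖x - y‖ - (-((deriv f ‖x - y‖ / ‖x - y‖) * ⟪x - y, z⟫)))
            * ctilde c y x z
            ≤ (f ‖x - y - z‖ - f ‖x - y‖ - (-((deriv f ‖x - y‖ / ‖x - y‖) * ⟪x - y, z⟫)))
              * |c x z - c y z| := mul_le_mul_of_nonneg_left (hctle' z) hpos.le
          _ ≤ (2 * deriv f ‖x - y‖ * ‖z‖) * |c x z - c y z| :=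
              mul_le_mul_of_nonneg_right hbr (abs_nonneg _)
          _ = g₁ z := by rw [hg₁]; ring
    · have hzS : z ∈ Sᶜ := by simp [hS, hz]
      simp only [hG₂]
      rw [Set.indicator_of_notMem (by simpa [hS] using hz), Set.indicator_of_mem hzS,
        zero_add, if_neg hz]
      have b1 := abs_le.mp (hf_bdd ‖x - (y + z)‖ (norm_nonneg _))
      have b2 := abs_le.mp (hf_bdd ‖x - y‖ (norm_nonneg _))
      have hb : f ‖x - (y + z)‖ - f ‖x - y‖ - 0 ≤ 2 * Mf := by linarith
      calc (f ‖x - (y + z)‖ - f ‖x - y‖ - 0) * ctilde c y x z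
          ≤ (2 * Mf) * ctilde c y x z := mul_le_mul_of_nonneg_right hb (hct0 y x z)
        _ = g₂' z := by rw [hg₂']
  -- combine
  have hLR1 : (∫ z, (f ‖x + z - y‖ - f ‖x - y‖
      - (if ‖z‖ ≤ 1 then (deriv f ‖x - y‖ / ‖x - y‖) * ⟪x - y, z⟫ else 0))
      * ctilde c x y z ∂ν) ≤ ∫ z, G₁ z ∂ν :=
    integral_le_of_forall_le hG₁int hG₁nn hle₁
  have hLR2 : (∫ z, (f ‖x - (y + z)‖ - f ‖x - y‖
      - (if ‖z‖ ≤ 1 then -((deriv f ‖x - y‖ / ‖x - y‖) * ⟪x - y, z⟫) else 0))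
      * ctilde c y x z ∂ν) ≤ ∫ z, G₂ z ∂ν :=
    integral_le_of_forall_le hG₂int hG₂nn hle₂
  -- the tail bound
  have hbig : (∫ z in Sᶜ, ctilde c x y z ∂ν) + (∫ z in Sᶜ, ctilde c y x z ∂ν)
      ≤ Mc * (ν Sᶜ).toReal := by
    rw [← integral_add hct_int hct'_int]
    have hstep : ∫ z in Sᶜ, (ctilde c x y z + ctilde c y x z) ∂ν
        ≤ ∫ _ in Sᶜ, Mc ∂ν := by
      refine setIntegral_mono_on (hct_int.add hct'_int)
        (integrableOn_const hνSc.ne) hSm.compl (fun z hz => ?_)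
      rw [hctsum]
      have hz1 : 1 < ‖z‖ := by rwa [hScEq] at hz
      have hx1 := hMc x z hz1
      have hy1 := hMc y z hz1
      have hx2 := hcLo' x z
      have hy2 := hcLo' y z
      rw [abs_le]; constructor <;> linarith
    rw [setIntegral_const, smul_eq_mul, mul_comm] at hstep
    exact hstep
  have hMfMc : 2 * Mf * ((∫ z in Sᶜ, ctilde c x y z ∂ν) + (∫ z in Sᶜ, ctilde c y x z ∂ν))
      ≤ 2 * Mf * (Mc * (ν Sᶜ).toReal) := mul_le_mul_of_nonneg_left hbig (by linarith)
  rw [LRdist] at *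
  rw [← hScEq]
  have hG1v := hG₁val
  have hG2v := hG₂val
  linarith [hLCle, hLR1, hLR2]



end
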